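/- Let G be an ample groupoid with Hausdorff unit space. Then the characteristic functions of compact open bisections, S = {1_O : O a compact open bisection}, with product 1_O · 1_N = 1_{ON}, form a bumpy semigroup (valued in the trivial group {1}). -/
import Mathlib


/-- A groupoid modelled as a set with a partially defined (Option-valued)
multiplication and an involution. -/
structure Gpd (G : Type*) where
  mul : G → G → Option G
  inv : G → G
  inv_inv : ∀ g, inv (inv g) = g
  inv_mul_isSome : ∀ g, (mul (inv g) g).isSome
  defined_iff : ∀ g h, (mul g h).isSome ↔ mul (inv g) g = mul h (inv h)
  massoc : ∀ {g h k gh hk}, mul g h = some gh → mul h k = some hk →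
      mul gh k = mul g hk
  inv_mul_cancel : ∀ {g h gh}, mul g h = some gh → mul (inv g) gh = some h
  mul_inv_cancel : ∀ {g h gh}, mul g h = some gh → mul gh (inv h) = some g
  mul_src : ∀ {g u}, mul (inv g) g = some u → mul g u = some g
  rng_mul : ∀ {g u}, mul g (inv g) = some u → mul u g = some g

namespace Gpd

variable {G Y : Type*} (𝒢 : Gpd G)

/-- The source `s(g) = g⁻¹g`. -/
def src (g : G) : G := (𝒢.mul (𝒢.inv g) g).getD g

/-- The range `r(g) = gg⁻¹`. -/
def rng (g : G) : G := (𝒢.mul g (𝒢.inv g)).getD g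

/-- The unit space `G⁰`. -/
def unitSpace : Set G := Set.range 𝒢.src

/-- The isotropy `G^iso`. -/
def iso : Set G := {g | 𝒢.src g = 𝒢.rng g}

/-- Bisections. -/
def IsBisection (B : Set G) : Prop :=
  ∀ g ∈ B, ∀ h ∈ B, (𝒢.src g = 𝒢.src h ∨ 𝒢.rng g = 𝒢.rng h) → g = h

/-- Isosections. -/
def IsIsosection (I : Set G) : Prop :=
  ∀ g ∈ I, ∀ h ∈ I, (𝒢.src g = 𝒢.src h ↔ 𝒢.rng g = 𝒢.rng h)

/-- Product of subsets. -/
def setMul (A B : Set G) : Set G := {x | ∃ g ∈ A, ∃ h ∈ B, 𝒢.mul g h = some x}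

/-- Inverse of a subset. -/
def setInv (A : Set G) : Set G := 𝒢.inv '' A

end Gpd

/-- The domain of a `Y`-valued partial function on `G`. -/
def pdom {G Y : Type*} (a : G → Option Y) : Set G := {g | (a g).isSome}

open Classical in
/-- The product of partial functions, `ab(gh) = a(g)b(h)` on factorizations
(well-defined when a domain is a bisection; defined by choice in general). -/
noncomputable def Gpd.convProd {G Y : Type*} [Mul Y] (𝒢 : Gpd G)
    (a b : G → Option Y) : G → Option Y := fun x =>
  if h : ∃ p : Y × Y, ∃ g k : G, a g = some p.1 ∧ b k = some p.2 ∧ 𝒢.mul g k = some x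
  then some (h.choose.1 * h.choose.2) else none

/-- The set `[Y^×]a` where the function takes invertible values. -/
def unitsPre {G Y : Type*} [Monoid Y] (a : G → Option Y) : Set G :=
  {g | ∃ y, a g = some y ∧ IsUnit y}

/-- The set `[1]a` where the function takes the value `1`. -/
def onePre {G Y : Type*} [Monoid Y] (a : G → Option Y) : Set G :=
  {g | a g = some (1 : Y)}

/-- A unital semigroup is `1`-cancellative if `xy = x ↔ y = 1 ↔ yx = x`. -/
def OneCancellative (Y : Type*) [Monoid Y] : Prop :=
  ∀ x y : Y, (x * y = x ↔ y = 1) ∧ (y * x = x ↔ y = 1)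

/-- The domination relation `a ≺_s b` relative to a diagonal `D`. -/
def precS {α : Type*} (m : α → α → α) (D : Set α) (a s b : α) : Prop :=
  m (m a s) b = a ∧ m (m b s) a = a ∧ m a s ∈ D ∧ m s a ∈ D

/-- Étale: inversion and multiplication continuous, source a local homeomorphism. -/
def Gpd.Etale {G : Type*} [TopologicalSpace G] (𝒢 : Gpd G) : Prop :=
  Continuous 𝒢.inv ∧
  Continuous (fun p : {p : G × G // (𝒢.mul p.1 p.2).isSome} =>
    (𝒢.mul p.val.1 p.val.2).get p.property) ∧
  IsLocalHomeomorph 𝒢.src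

/-- Ample: étale with a basis of compact open bisections. -/
def Gpd.Ample {G : Type*} [TopologicalSpace G] (𝒢 : Gpd G) : Prop :=
  𝒢.Etale ∧ TopologicalSpace.IsTopologicalBasis
    {O : Set G | IsCompact O ∧ IsOpen O ∧ 𝒢.IsBisection O}

/-- Bumpy semigroups of `Y`-valued functions on open bisections. -/
structure Gpd.IsBumpy {G Y : Type*} [TopologicalSpace G] [Monoid Y] (𝒢 : Gpd G)
    (S : Set (G → Option Y)) : Prop where
  domBisection : ∀ a ∈ S, 𝒢.IsBisection (pdom a)
  domOpen : ∀ a ∈ S, IsOpen (pdom a)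
  mulClosed : ∀ a ∈ S, ∀ b ∈ S, 𝒢.convProd a b ∈ S
  oneProper : ∀ a ∈ S, IsCompact (onePre a)
  empty_mem : (fun _ => (none : Option Y)) ∈ S
  urysohn : ∀ O : Set G, IsOpen O → ∀ g ∈ O, ∃ a ∈ S,
    pdom a ⊆ O ∧ g ∈ interior (unitsPre a)
  involutive : ∀ a ∈ S, ∀ g ∈ interior (unitsPre a), ∃ b ∈ S,
    𝒢.inv g ∈ interior {h | ∃ y z, a (𝒢.inv h) = some y ∧ b h = some z ∧
      y * z = 1 ∧ z * y = 1}

/-- Compact-bumpy semigroups. -/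
structure Gpd.IsCompactBumpy {G Y : Type*} [TopologicalSpace G] [Monoid Y] (𝒢 : Gpd G)
    (S : Set (G → Option Y)) : Prop where
  bumpy : 𝒢.IsBumpy S
  compactUrysohn : ∀ C O : Set G, IsCompact C → 𝒢.IsBisection C → IsOpen O →
    𝒢.IsBisection O → C ⊆ O → ∃ a ∈ S, pdom a ⊆ O ∧ C ⊆ unitsPre a
  compactInvolutive : ∀ a ∈ S, ∀ C ⊆ unitsPre a, IsCompact C → ∃ b ∈ S,
    ∀ g ∈ C, ∃ y z, a g = some y ∧ b (𝒢.inv g) = some z ∧ y * z = 1 ∧ z * y = 1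


open Classical in
/-- The `{1}`-valued characteristic function of a subset. -/
noncomputable def indFn {G : Type*} (O : Set G) : G → Option PUnit :=
  fun g => if g ∈ O then some 1 else none


-- ===================== auxiliary lemmas =====================

namespace Gpd

variable {G : Type*} (𝒢 : Gpd G)

lemma src_spec (g : G) : 𝒢.mul (𝒢.inv g) g = some (𝒢.src g) := by
  obtain ⟨u, hu⟩ := Option.isSome_iff_exists.mp (𝒢.inv_mul_isSome g)
  simp [Gpd.src, hu]

lemma rng_spec (g : G) : 𝒢.mul g (𝒢.inv g) = some (𝒢.rng g) := by
  have h := 𝒢.inv_mul_isSome (𝒢.inv g)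
  rw [𝒢.inv_inv] at h
  obtain ⟨u, hu⟩ := Option.isSome_iff_exists.mp h
  simp [Gpd.rng, hu]

lemma src_inv (g : G) : 𝒢.src (𝒢.inv g) = 𝒢.rng g := by
  unfold Gpd.src
  rw [𝒢.inv_inv, 𝒢.rng_spec]
  rfl

lemma rng_inv (g : G) : 𝒢.rng (𝒢.inv g) = 𝒢.src g := by
  unfold Gpd.rng
  rw [𝒢.inv_inv, 𝒢.src_spec]
  rfl

lemma isSome_iff (g h : G) : (𝒢.mul g h).isSome ↔ 𝒢.src g = 𝒢.rng h := by
  rw [𝒢.defined_iff, 𝒢.src_spec, 𝒢.rng_spec, Option.some_inj]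

lemma src_of_mul {g h x : G} (hx : 𝒢.mul g h = some x) : 𝒢.src x = 𝒢.src h := by
  have h1 := 𝒢.mul_inv_cancel hx
  have h2 : (𝒢.mul x (𝒢.inv h)).isSome := by simp [h1]
  rw [𝒢.isSome_iff, 𝒢.rng_inv] at h2
  exact h2

lemma rng_of_mul {g h x : G} (hx : 𝒢.mul g h = some x) : 𝒢.rng x = 𝒢.rng g := by
  have h1 := 𝒢.inv_mul_cancel hx
  have h2 : (𝒢.mul (𝒢.inv g) x).isSome := by simp [h1]
  rw [𝒢.isSome_iff, 𝒢.src_inv] at h2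
  exact h2.symm

lemma src_rng_of_mul {g h x : G} (hx : 𝒢.mul g h = some x) : 𝒢.src g = 𝒢.rng h :=
  (𝒢.isSome_iff g h).mp (by simp [hx])

lemma src_mem (g : G) : 𝒢.src g ∈ 𝒢.unitSpace := ⟨g, rfl⟩

lemma rng_mem (g : G) : 𝒢.rng g ∈ 𝒢.unitSpace := ⟨𝒢.inv g, 𝒢.src_inv g⟩

lemma setMul_bisection {O N : Set G} (hO : 𝒢.IsBisection O) (hN : 𝒢.IsBisection N) :
    𝒢.IsBisection (𝒢.setMul O N) := by
  rintro x ⟨g, hg, k, hk, hx⟩ y ⟨g', hg', k', hk', hy⟩ hcase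
  rcases hcase with h | h
  · have hk2 : k = k' := hN k hk k' hk'
      (Or.inl (by rw [← 𝒢.src_of_mul hx, ← 𝒢.src_of_mul hy, h]))
    subst hk2
    have hg2 : g = g' := hO g hg g' hg'
      (Or.inl (by rw [𝒢.src_rng_of_mul hx, 𝒢.src_rng_of_mul hy]))
    subst hg2
    exact Option.some.inj (hx.symm.trans hy)
  · have hg2 : g = g' := hO g hg g' hg'
      (Or.inr (by rw [← 𝒢.rng_of_mul hx, ← 𝒢.rng_of_mul hy, h]))
    subst hg2
    have hk2 : k = k' := hN k hk k' hk'
      (Or.inr (by rw [← 𝒢.src_rng_of_mul hx, ← 𝒢.src_rng_of_mul hy]))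
    subst hk2
    exact Option.some.inj (hx.symm.trans hy)

variable [TopologicalSpace G]

lemma continuous_src (hE : 𝒢.Etale) : Continuous 𝒢.src := hE.2.2.continuous

lemma rng_eq_src_inv : 𝒢.rng = 𝒢.src ∘ 𝒢.inv := funext fun g => (𝒢.src_inv g).symm

lemma continuous_rng (hE : 𝒢.Etale) : Continuous 𝒢.rng := by
  rw [𝒢.rng_eq_src_inv]
  exact (𝒢.continuous_src hE).comp hE.1

lemma inv_image_eq_preimage (U : Set G) : 𝒢.inv '' U = 𝒢.inv ⁻¹' U := by
  ext x
  constructor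
  · rintro ⟨y, hy, rfl⟩
    simpa [𝒢.inv_inv] using hy
  · intro hx
    exact ⟨𝒢.inv x, hx, 𝒢.inv_inv x⟩

lemma inv_openMap (hE : 𝒢.Etale) : IsOpenMap 𝒢.inv := by
  intro U hU
  rw [𝒢.inv_image_eq_preimage]
  exact hU.preimage hE.1

lemma rng_openMap (hE : 𝒢.Etale) : IsOpenMap 𝒢.rng := by
  rw [𝒢.rng_eq_src_inv]
  exact hE.2.2.isOpenMap.comp (𝒢.inv_openMap hE)

lemma isClosed_defined (hE : 𝒢.Etale) (hT2 : T2Space 𝒢.unitSpace) :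
    IsClosed {p : G × G | (𝒢.mul p.1 p.2).isSome} := by
  have heq : {p : G × G | (𝒢.mul p.1 p.2).isSome} =
      (fun p : G × G => ((⟨𝒢.src p.1, 𝒢.src_mem p.1⟩ : 𝒢.unitSpace),
        (⟨𝒢.rng p.2, 𝒢.rng_mem p.2⟩ : 𝒢.unitSpace))) ⁻¹' (Set.diagonal 𝒢.unitSpace) := by
    ext p
    simp [Set.mem_diagonal_iff, Subtype.ext_iff, 𝒢.isSome_iff]
  rw [heq]
  exact isClosed_diagonal.preimage
    ((((𝒢.continuous_src hE).comp continuous_fst).subtype_mk _).prodMk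
      (((𝒢.continuous_rng hE).comp continuous_snd).subtype_mk _))

lemma setMul_compact (hE : 𝒢.Etale) (hT2 : T2Space 𝒢.unitSpace) {O N : Set G}
    (hOc : IsCompact O) (hNc : IsCompact N) : IsCompact (𝒢.setMul O N) := by
  have hD : IsClosed {p : G × G | (𝒢.mul p.1 p.2).isSome} := 𝒢.isClosed_defined hE hT2
  have hK : IsCompact ((O ×ˢ N) ∩ {p : G × G | (𝒢.mul p.1 p.2).isSome}) :=
    (hOc.prod hNc).inter_right hD
  set m : {p : G × G // (𝒢.mul p.1 p.2).isSome} → G :=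
    fun p => (𝒢.mul p.val.1 p.val.2).get p.property with hm_def
  have hm : Continuous m := hE.2.1
  have hT : IsCompact (Subtype.val ⁻¹' (O ×ˢ N) :
      Set {p : G × G // (𝒢.mul p.1 p.2).isSome}) := by
    rw [Topology.IsEmbedding.subtypeVal.isCompact_iff]
    have hval : (Subtype.val '' (Subtype.val ⁻¹' (O ×ˢ N) :
        Set {p : G × G // (𝒢.mul p.1 p.2).isSome})) =
        (O ×ˢ N) ∩ {p : G × G | (𝒢.mul p.1 p.2).isSome} := by
      ext p
      constructor
      · rintro ⟨⟨q, hq⟩, hmem, rfl⟩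
        exact ⟨hmem, hq⟩
      · rintro ⟨hmem, hq⟩
        exact ⟨⟨p, hq⟩, hmem, rfl⟩
    rw [hval]
    exact hK
  have himg : 𝒢.setMul O N = m '' (Subtype.val ⁻¹' (O ×ˢ N)) := by
    ext x
    constructor
    · rintro ⟨g, hg, k, hk, hmul⟩
      refine ⟨⟨(g, k), by simp [hmul]⟩, ⟨hg, hk⟩, ?_⟩
      simp [hm_def, hmul]
    · rintro ⟨⟨⟨g, k⟩, hp⟩, ⟨hg, hk⟩, rfl⟩
      exact ⟨g, hg, k, hk, by simp [hm_def]⟩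
  rw [himg]
  exact hT.image hm

lemma setMul_open (hE : 𝒢.Etale) (hT2 : T2Space 𝒢.unitSpace) {O N : Set G}
    (hOc : IsCompact O) (hOo : IsOpen O) (hOb : 𝒢.IsBisection O)
    (hNo : IsOpen N) : IsOpen (𝒢.setMul O N) := by
  haveI : CompactSpace O := isCompact_iff_compactSpace.mp hOc
  set ρ : O → 𝒢.unitSpace := fun g => ⟨𝒢.rng g.val, 𝒢.rng_mem _⟩ with hρ_def
  have hρc : Continuous ρ := ((𝒢.continuous_rng hE).comp continuous_subtype_val).subtype_mk _
  have hρi : Function.Injective ρ := by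
    rintro ⟨g, hg⟩ ⟨h, hh⟩ hgh
    have h1 : 𝒢.rng g = 𝒢.rng h := congrArg Subtype.val hgh
    exact Subtype.ext (hOb g hg h hh (Or.inr h1))
  set e : O ≃ₜ Set.range ρ :=
    Continuous.homeoOfEquivCompactToT2 (f := Equiv.ofInjective ρ hρi) (hρc.subtype_mk _) with he_def
  have hcoe : ∀ x : O, (e x : 𝒢.unitSpace) = ρ x := fun x => rfl
  have hρe : ∀ y : Set.range ρ, ρ (e.symm y) = y.val := by
    intro y
    rw [← hcoe]
    exact congrArg Subtype.val (e.apply_symm_apply y)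
  set P : Set G := 𝒢.rng ⁻¹' (𝒢.rng '' O) with hP_def
  have hPo : IsOpen P := (𝒢.rng_openMap hE O hOo).preimage (𝒢.continuous_rng hE)
  have hφmem : ∀ x : P, (⟨𝒢.rng x.val, 𝒢.rng_mem _⟩ : 𝒢.unitSpace) ∈ Set.range ρ := by
    rintro ⟨x, g, hg, hgx⟩
    exact ⟨⟨g, hg⟩, Subtype.ext hgx⟩
  set φ : P → Set.range ρ := fun x => ⟨⟨𝒢.rng x.val, 𝒢.rng_mem _⟩, hφmem x⟩ with hφ_def
  have hφc : Continuous φ :=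
    ((((𝒢.continuous_rng hE).comp continuous_subtype_val).subtype_mk _).subtype_mk _)
  set gf : P → G := fun x => ((e.symm (φ x)) : O).val with hgf_def
  have hgfc : Continuous gf :=
    continuous_subtype_val.comp (e.symm.continuous.comp hφc)
  have hgfO : ∀ x : P, gf x ∈ O := fun x => ((e.symm (φ x)) : O).property
  have hrgf : ∀ x : P, 𝒢.rng (gf x) = 𝒢.rng x.val := by
    intro x
    exact congrArg Subtype.val (hρe (φ x))
  have hks : ∀ x : P, (𝒢.mul (𝒢.inv (gf x)) x.val).isSome := by
    intro x
    rw [𝒢.isSome_iff, 𝒢.src_inv, hrgf]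
  set m : {p : G × G // (𝒢.mul p.1 p.2).isSome} → G :=
    fun p => (𝒢.mul p.val.1 p.val.2).get p.property with hm_def
  have hm : Continuous m := hE.2.1
  set kf : P → G := fun x => m ⟨(𝒢.inv (gf x), x.val), hks x⟩ with hkf_def
  have hkfc : Continuous kf :=
    hm.comp (Continuous.subtype_mk ((hE.1.comp hgfc).prodMk continuous_subtype_val) _)
  have hkf_spec : ∀ x : P, 𝒢.mul (𝒢.inv (gf x)) x.val = some (kf x) := by
    intro x
    simp [hkf_def, hm_def]
  have hset : 𝒢.setMul O N = Subtype.val '' (kf ⁻¹' N) := by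
    ext x
    constructor
    · rintro ⟨g, hg, k, hk, hmul⟩
      have hxP : x ∈ P := ⟨g, hg, (𝒢.rng_of_mul hmul).symm⟩
      refine ⟨⟨x, hxP⟩, ?_, rfl⟩
      have hgeq : gf ⟨x, hxP⟩ = g := by
        refine hOb _ (hgfO ⟨x, hxP⟩) g hg (Or.inr ?_)
        rw [hrgf ⟨x, hxP⟩]
        exact 𝒢.rng_of_mul hmul
      have h3 := hkf_spec ⟨x, hxP⟩
      rw [hgeq] at h3
      have h2 := 𝒢.inv_mul_cancel hmul
      show kf ⟨x, hxP⟩ ∈ N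
      rw [Option.some.inj (h3.symm.trans h2)]
      exact hk
    · rintro ⟨⟨x, hxP⟩, hkN, rfl⟩
      refine ⟨gf ⟨x, hxP⟩, hgfO _, kf ⟨x, hxP⟩, hkN, ?_⟩
      have h1 := 𝒢.inv_mul_cancel (hkf_spec ⟨x, hxP⟩)
      rwa [𝒢.inv_inv] at h1
  rw [hset]
  exact (hPo.isOpenEmbedding_subtypeVal).isOpenMap _ (hNo.preimage hkfc)

lemma setInv_bisection {O : Set G} (hOb : 𝒢.IsBisection O) :
    𝒢.IsBisection (𝒢.inv '' O) := by
  rintro x ⟨g, hg, rfl⟩ y ⟨h, hh, rfl⟩ hcase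
  refine congrArg 𝒢.inv (hOb g hg h hh ?_)
  rcases hcase with h1 | h1
  · rw [𝒢.src_inv, 𝒢.src_inv] at h1
    exact Or.inr h1
  · rw [𝒢.rng_inv, 𝒢.rng_inv] at h1
    exact Or.inl h1

end Gpd

lemma pdom_indFn {G : Type*} (O : Set G) : pdom (indFn O) = O := by
  ext g
  by_cases h : g ∈ O <;> simp [pdom, indFn, h]

lemma onePre_indFn {G : Type*} (O : Set G) : onePre (indFn O) = O := by
  ext g
  by_cases h : g ∈ O <;> simp [onePre, indFn, h]

lemma unitsPre_indFn {G : Type*} (O : Set G) : unitsPre (indFn O) = O := by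
  ext g
  simp only [unitsPre, Set.mem_setOf_eq]
  constructor
  · rintro ⟨y, hy, -⟩
    by_contra h
    simp [indFn, h] at hy
  · intro h
    exact ⟨1, by simp [indFn, h], isUnit_one⟩

lemma convProd_indFn {G : Type*} (𝒢 : Gpd G) (O N : Set G) :
    𝒢.convProd (indFn O) (indFn N) = indFn (𝒢.setMul O N) := by
  funext x
  rw [Gpd.convProd]
  by_cases hx : x ∈ 𝒢.setMul O N
  · obtain ⟨g, hg, k, hk, hmul⟩ := id hx
    have h : ∃ p : PUnit × PUnit, ∃ g k : G,
        indFn O g = some p.1 ∧ indFn N k = some p.2 ∧ 𝒢.mul g k = some x :=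
      ⟨(1, 1), g, k, by simp [indFn, hg], by simp [indFn, hk], hmul⟩
    rw [dif_pos h]
    simp [indFn, hx]
  · have hno : ¬ ∃ p : PUnit × PUnit, ∃ g k : G,
        indFn O g = some p.1 ∧ indFn N k = some p.2 ∧ 𝒢.mul g k = some x := by
      rintro ⟨p, g, k, hg, hk, hmul⟩
      refine hx ⟨g, ?_, k, ?_, hmul⟩
      · by_contra h
        simp [indFn, h] at hg
      · by_contra h
        simp [indFn, h] at hk
    rw [dif_neg hno]
    simp [indFn, hx]


/-- for an ample groupoid with Hausdorff unit space, the
characteristic functions of compact open bisections form a bumpy semigroup,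
with `1_O · 1_N = 1_{ON}`. -/
theorem stmt18 {G : Type*} [TopologicalSpace G] (𝒢 : Gpd G)
    (hA : 𝒢.Ample) (hT2 : T2Space 𝒢.unitSpace)
    (S : Set (G → Option PUnit))
    (hSdef : S = {a | ∃ O : Set G, IsCompact O ∧ IsOpen O ∧ 𝒢.IsBisection O ∧
      a = indFn O}) :
    𝒢.IsBumpy S ∧
    (∀ O N : Set G, IsCompact O → IsOpen O → 𝒢.IsBisection O →
      IsCompact N → IsOpen N → 𝒢.IsBisection N →
      𝒢.convProd (indFn O) (indFn N) = indFn (𝒢.setMul O N)) := by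
  haveI := hT2
  have hE := hA.1
  subst hSdef
  constructor
  · constructor
    · rintro a ⟨O, hOc, hOo, hOb, rfl⟩
      rw [pdom_indFn]
      exact hOb
    · rintro a ⟨O, hOc, hOo, hOb, rfl⟩
      rw [pdom_indFn]
      exact hOo
    · rintro a ⟨O, hOc, hOo, hOb, rfl⟩ b ⟨N, hNc, hNo, hNb, rfl⟩
      exact ⟨𝒢.setMul O N, 𝒢.setMul_compact hE hT2 hOc hNc,
        𝒢.setMul_open hE hT2 hOc hOo hOb hNo, 𝒢.setMul_bisection hOb hNb,
        convProd_indFn 𝒢 O N⟩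
    · rintro a ⟨O, hOc, hOo, hOb, rfl⟩
      rw [onePre_indFn]
      exact hOc
    · refine ⟨∅, isCompact_empty, isOpen_empty, ?_, ?_⟩
      · rintro g hg
        exact absurd hg (Set.notMem_empty g)
      · funext g
        simp [indFn]
    · intro O hOo g hg
      obtain ⟨B, ⟨hBc, hBo, hBb⟩, hgB, hBO⟩ := hA.2.exists_subset_of_mem_open hg hOo
      refine ⟨indFn B, ⟨B, hBc, hBo, hBb, rfl⟩, ?_, ?_⟩
      · rw [pdom_indFn]
        exact hBO
      · rw [unitsPre_indFn, hBo.interior_eq]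
        exact hgB
    · rintro a ⟨O, hOc, hOo, hOb, rfl⟩ g hg
      rw [unitsPre_indFn, hOo.interior_eq] at hg
      have hIc : IsCompact (𝒢.inv '' O) := hOc.image hE.1
      have hIo : IsOpen (𝒢.inv '' O) := 𝒢.inv_openMap hE O hOo
      refine ⟨indFn (𝒢.inv '' O), ⟨𝒢.inv '' O, hIc, hIo, 𝒢.setInv_bisection hOb, rfl⟩, ?_⟩
      have hsub : 𝒢.inv '' O ⊆ {h | ∃ y z, indFn O (𝒢.inv h) = some y ∧
          indFn (𝒢.inv '' O) h = some z ∧ y * z = 1 ∧ z * y = 1} := by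
        rintro h ⟨g₀, hg₀, rfl⟩
        refine ⟨1, 1, ?_, ?_, mul_one 1, mul_one 1⟩
        · rw [𝒢.inv_inv]
          simp [indFn, hg₀]
        · simp only [indFn, if_pos (Set.mem_image_of_mem _ hg₀)]
      exact interior_maximal hsub hIo (Set.mem_image_of_mem _ hg)
  · intro O N hOc hOo hOb hNc hNo hNb
    exact convProd_indFn 𝒢 O N
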